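/- Let X, Y, Z be Banach spaces, S ⊆ Z a closed subspace with finite-dimensional quotient N = Z/S, and f : X ⊕ Y → Z a bounded linear map whose composition with the quotient map Z → N is surjective. Then K = f⁻¹(S) is a closed complemented subspace of X ⊕ Y, and the projection π : K → Y satisfies ker(π) ≅ ker(q ∘ f|_X) and coker(π) ≅ coker(q ∘ f|_X), where q : Z → N is the quotient map and f|_X : X → Z the restriction to X ⊕ {0}. -/

import Mathlib

open Module

/-- Let `S ⊆ Z` be a closed subspace with finite-dimensional quotient `N = Z/S`, and
`f : X × Y → Z` bounded linear such that `q ∘ f` is surjective, where `q : Z → Z/S` is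
the quotient map. Then `K = f⁻¹(S)` is a closed complemented subspace of `X × Y`, and
the projection `π : K → Y` satisfies `ker π ≅ ker (q ∘ f|_X)` and
`coker π ≅ coker (q ∘ f|_X)`. -/
theorem fredholm_projection_linear
    {X Y Z : Type*}
    [NormedAddCommGroup X] [NormedSpace ℝ X] [CompleteSpace X]
    [NormedAddCommGroup Y] [NormedSpace ℝ Y] [CompleteSpace Y]
    [NormedAddCommGroup Z] [NormedSpace ℝ Z] [CompleteSpace Z]
    (S : Submodule ℝ Z) (hS : IsClosed (S : Set Z))
    [FiniteDimensional ℝ (Z ⧸ S)]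
    (f : (X × Y) →L[ℝ] Z)
    (hsurj : Function.Surjective (fun p : X × Y => S.mkQ (f p)))
    (K : Submodule ℝ (X × Y)) (hK : K = Submodule.comap (f : (X × Y) →ₗ[ℝ] Z) S)
    (π : K →L[ℝ] Y) (hπ : ∀ x : K, π x = (x : X × Y).2)
    (A : X →ₗ[ℝ] (Z ⧸ S)) (hA : ∀ x : X, A x = Submodule.Quotient.mk (f (x, 0))) :
    IsClosed (K : Set (X × Y)) ∧ K.ClosedComplemented ∧
    Nonempty ((LinearMap.ker (π : K →ₗ[ℝ] Y)) ≃ₗ[ℝ] (LinearMap.ker A)) ∧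
    Nonempty ((Y ⧸ LinearMap.range (π : K →ₗ[ℝ] Y)) ≃ₗ[ℝ] ((Z ⧸ S) ⧸ LinearMap.range A)) := by
  have hKmem : ∀ p : X × Y, p ∈ K ↔ f p ∈ S := by
    intro p; rw [hK]; exact Iff.rfl
  have hclosed : IsClosed (K : Set (X × Y)) := by
    have : (K : Set (X × Y)) = f ⁻¹' (S : Set Z) := by
      ext p; exact hKmem p
    rw [this]
    exact hS.preimage f.continuous
  refine ⟨hclosed, ?_, ?_, ?_⟩
  · -- closed complemented
    have hker : K = LinearMap.ker (S.mkQ ∘ₗ (f : (X × Y) →ₗ[ℝ] Z)) := by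
      ext p
      simp [hKmem p, LinearMap.mem_ker, Submodule.Quotient.mk_eq_zero]
    have e : ((X × Y) ⧸ K) ≃ₗ[ℝ] (Z ⧸ S) := by
      rw [hker]
      exact LinearMap.quotKerEquivOfSurjective _ hsurj
    haveI : FiniteDimensional ℝ ((X × Y) ⧸ K) := e.symm.finiteDimensional
    exact Submodule.ClosedComplemented.of_quotient_finiteDimensional hclosed
  · -- kernel equivalence
    refine ⟨{ toFun := fun k => ⟨(k.1 : X × Y).1, ?_⟩
              map_add' := ?_
              map_smul' := ?_
              invFun := fun x => ⟨⟨(x.1, 0), ?_⟩, ?_⟩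
              left_inv := ?_
              right_inv := ?_ }⟩
    · obtain ⟨⟨p, hp⟩, hk⟩ := k
      have h2 : p.2 = 0 := by
        have := hπ ⟨p, hp⟩
        rw [LinearMap.mem_ker, ContinuousLinearMap.coe_coe] at hk
        simpa [hk] using this.symm
      have hp' : f p ∈ S := (hKmem p).1 hp
      rw [LinearMap.mem_ker, hA]
      have : (p.1, (0 : Y)) = p := by ext <;> simp [h2]
      rw [this, Submodule.Quotient.mk_eq_zero]
      exact hp'
    · intros; rfl
    · intros; rfl
    · have := x.2
      rw [LinearMap.mem_ker, hA, Submodule.Quotient.mk_eq_zero] at this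
      exact (hKmem _).2 this
    · rw [LinearMap.mem_ker, ContinuousLinearMap.coe_coe, hπ]
    · rintro ⟨⟨p, hp⟩, hk⟩
      have h2 : p.2 = 0 := by
        have := hπ ⟨p, hp⟩
        rw [LinearMap.mem_ker, ContinuousLinearMap.coe_coe] at hk
        simpa [hk] using this.symm
      ext
      · rfl
      · exact h2.symm
    · rintro ⟨x, hx⟩; rfl
  · -- cokernel equivalence
    set B : Y →ₗ[ℝ] ((Z ⧸ S) ⧸ LinearMap.range A) :=
      (LinearMap.range A).mkQ ∘ₗ S.mkQ ∘ₗ (f : (X × Y) →ₗ[ℝ] Z) ∘ₗ LinearMap.inr ℝ X Y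
    have hBsurj : Function.Surjective B := by
      intro n
      obtain ⟨n', rfl⟩ := Submodule.mkQ_surjective _ n
      obtain ⟨⟨x, y⟩, hxy⟩ := hsurj n'
      refine ⟨y, ?_⟩
      simp only [B, LinearMap.comp_apply, LinearMap.inr_apply, Submodule.mkQ_apply]
      rw [show n' = S.mkQ (f (x, y)) from hxy.symm]
      rw [Submodule.Quotient.eq]
      refine ⟨-x, ?_⟩
      rw [hA]
      have h1 : ((-x : X), (0 : Y)) = ((0 : X), y) - (x, y) := by ext <;> simp
      simp only [Submodule.mkQ_apply]
      rw [h1, map_sub, Submodule.Quotient.mk_sub]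
      rfl
    have hBker : LinearMap.ker B = LinearMap.range (π : K →ₗ[ℝ] Y) := by
      ext y
      simp only [LinearMap.mem_ker, LinearMap.mem_range, B, LinearMap.comp_apply,
        LinearMap.inr_apply, Submodule.mkQ_apply, Submodule.Quotient.mk_eq_zero,
        LinearMap.mem_range, ContinuousLinearMap.coe_coe]
      constructor
      · rintro ⟨x, hx⟩
        rw [hA] at hx
        have hmem : f (-x, y) ∈ S := by
          have : ((-x : X), y) = (0, y) - (x, 0) := by ext <;> simp
          rw [this, map_sub]
          rw [← Submodule.Quotient.eq]
          exact hx.symm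
        exact ⟨⟨(-x, y), (hKmem _).2 hmem⟩, by rw [hπ]⟩
      · rintro ⟨k, rfl⟩
        rw [hπ]
        refine ⟨-(k : X × Y).1, ?_⟩
        rw [hA]
        have h1 : ((-(k : X × Y).1 : X), (0 : Y)) = ((0 : X), (k : X × Y).2) - (k : X × Y) := by
          ext <;> simp
        have h0 : (Submodule.Quotient.mk (f (k : X × Y)) : Z ⧸ S) = 0 :=
          (Submodule.Quotient.mk_eq_zero _).2 ((hKmem _).1 k.2)
        rw [h1, map_sub, Submodule.Quotient.mk_sub, h0, sub_zero]
    refine ⟨(Submodule.quotEquivOfEq _ _ hBker.symm).trans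
      (B.quotKerEquivOfSurjective hBsurj)⟩
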